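/- Let μ > 0 and Λ ∈ ℂ with Im Λ > 0, and define the (maximal) Jacobi operator J(Λ;μ) on ℓ²(ℕ₀) by (J(Λ;μ)C)_n = d_{n+1}C_{n+1} + 2μ y_n(Λ) C_n + d_n C_{n−1}, where d_n = n^{1/2}(n²−1/4)^{1/4} and y_n(Λ) = (n+1/2)^{1/2}√(n+1/2−Λ) (branch with Re > 0, analytic off [n+1/2,∞)). Then for every C ∈ Dom J(Λ;μ) that is finitely supported, Im⟨J(Λ;μ)C, C⟩ ≤ −δ(Λ)‖C‖² for some δ(Λ) > 0 depending only on Λ and μ; in particular J(Λ;μ) has trivial kernel on finitely supported sequences. -/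

import Mathlib

/-- Off-diagonal Jacobi entries `d_n = n^{1/2}(n²−1/4)^{1/4}` (so `d_0 = 0`). -/
noncomputable def dEnt (n : ℕ) : ℝ :=
  Real.sqrt n * ((n : ℝ) ^ 2 - 1 / 4) ^ ((1 : ℝ) / 4)

/-- `ζ_n(Λ) = √(n + 1/2 − Λ)`, principal branch of the square root. -/
noncomputable def zeta (n : ℕ) (Λ : ℂ) : ℂ := ((n : ℂ) + 1 / 2 - Λ) ^ ((1 : ℂ) / 2)

/-- `y_n(Λ) = (n+1/2)^{1/2} ζ_n(Λ)`. -/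
noncomputable def yEnt (n : ℕ) (Λ : ℂ) : ℂ :=
  ((Real.sqrt ((n : ℝ) + 1 / 2) : ℝ) : ℂ) * zeta n Λ

/-- The Jacobi operator `J(Λ;μ)` applied to a sequence. -/
noncomputable def JLam (Λ : ℂ) (μ : ℝ) (C : ℕ → ℂ) (n : ℕ) : ℂ :=
  (dEnt (n + 1) : ℂ) * C (n + 1) + 2 * (μ : ℂ) * yEnt n Λ * C n
    + (dEnt n : ℂ) * C (n - 1)

/-!
The off-diagonal entries `d n` are real and `d 0 = 0`, so summation by parts turns the
off-diagonal part of `⟨J C, C⟩` into `S + conj S` with `S = ∑ d (n+1) C (n+1) conj (C n)`;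
it is real, and `Im ⟨J C, C⟩ = 2μ ∑ Im y_n |C_n|²`. For `w = n + 1/2 - Λ` the principal root
satisfies `(Im √w)² = (|w| - Re w) / 2 ≥ (Im w)² / (4|w|)`, and `|w| ≤ (n + 1/2)(1 + 2|Λ|)`,
so `-Im y_n ≥ Im Λ / (2 √(1 + 2|Λ|))` uniformly in `n`.
-/

open Finset ComplexConjugate

namespace Complex

lemma neg_im_cpow_one_div_two_ge {w : ℂ} (hw : w.im < 0) {M : ℝ} (hM : ‖w‖ ≤ M) :
    -w.im / (2 * √M) ≤ -(w ^ (1 / 2 : ℂ)).im := by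
  have hw0 : 0 < ‖w‖ := norm_pos_iff.mpr (by rintro rfl; simp at hw)
  have hM0 : 0 < M := hw0.trans_le hM
  have hsq : ‖w‖ ^ 2 = w.re ^ 2 + w.im ^ 2 := by rw [Complex.sq_norm, normSq_apply]; ring
  rw [one_div, cpow_inv_two_im_eq_neg_sqrt hw, neg_neg,
    Real.le_sqrt (div_nonneg (by linarith) (by positivity)) (by linarith [re_le_norm w]),
    div_pow, mul_pow, Real.sq_sqrt hM0.le, div_le_iff₀ (by positivity)]
  -- `w.im ^ 2 = (‖w‖ - w.re) (‖w‖ + w.re)` and `‖w‖ + w.re ≤ 2 M`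
  nlinarith [abs_le.mp (abs_re_le_norm w)]

end Complex

lemma norm_natCast_add_half_sub_le (n : ℕ) (Λ : ℂ) :
    ‖(n : ℂ) + 1 / 2 - Λ‖ ≤ ((n : ℝ) + 1 / 2) * (1 + 2 * ‖Λ‖) := by
  have hcast : (n : ℂ) + 1 / 2 = (((n : ℝ) + 1 / 2 : ℝ) : ℂ) := by push_cast; ring
  calc ‖(n : ℂ) + 1 / 2 - Λ‖ ≤ ((n : ℝ) + 1 / 2) + ‖Λ‖ := by
        grw [norm_sub_le, hcast, Complex.norm_real, Real.norm_of_nonneg (by positivity)]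
    _ ≤ ((n : ℝ) + 1 / 2) * (1 + 2 * ‖Λ‖) := by nlinarith [norm_nonneg Λ, n.cast_nonneg (α := ℝ)]

lemma yEnt_im_le (n : ℕ) {Λ : ℂ} (hΛ : 0 < Λ.im) :
    (yEnt n Λ).im ≤ -(Λ.im / (2 * √(1 + 2 * ‖Λ‖))) := by
  have ha : 0 < √((n : ℝ) + 1 / 2) := Real.sqrt_pos.mpr (by positivity)
  have hw : ((n : ℂ) + 1 / 2 - Λ).im = -Λ.im := by simp
  have hζ := Complex.neg_im_cpow_one_div_two_ge (by linarith) (norm_natCast_add_half_sub_le n Λ)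
  rw [hw, neg_neg, Real.sqrt_mul (by positivity)] at hζ
  rw [yEnt, zeta, Complex.im_ofReal_mul]
  calc _ ≤ √((n : ℝ) + 1 / 2) * -(Λ.im / (2 * (√((n : ℝ) + 1 / 2) * √(1 + 2 * ‖Λ‖)))) :=
        mul_le_mul_of_nonneg_left (by linarith) ha.le
    _ = -(Λ.im / (2 * √(1 + 2 * ‖Λ‖))) := by field_simp

section Jacobi

variable (d : ℕ → ℝ) (b : ℕ → ℂ)

-- At `n = 0` the last term reads `C 0` (truncated subtraction); the lemmas assume `d 0 = 0`.
noncomputable def jacobiOp (C : ℕ → ℂ) (n : ℕ) : ℂ :=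
  (d (n + 1) : ℂ) * C (n + 1) + b n * C n + (d n : ℂ) * C (n - 1)

variable {d}

lemma im_sum_range_offDiag_mul_conj (hd : d 0 = 0) {C : ℕ → ℂ} {N : ℕ} (hN : C N = 0) :
    (∑ n ∈ range (N + 1),
      ((d (n + 1) : ℂ) * C (n + 1) + (d n : ℂ) * C (n - 1)) * conj (C n)).im = 0 := by
  set A := ∑ k ∈ range N, (d (k + 1) : ℂ) * C (k + 1) * conj (C k)
  have hup : ∑ n ∈ range (N + 1), (d (n + 1) : ℂ) * C (n + 1) * conj (C n) = A := by
    simp [sum_range_succ, hN, A]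
  have hdown : ∑ n ∈ range (N + 1), (d n : ℂ) * C (n - 1) * conj (C n) = conj A := by
    simp only [sum_range_succ', hd, map_sum, A, map_mul, Complex.conj_ofReal, Complex.conj_conj]
    simp [mul_comm, mul_assoc]
  simp only [add_mul, sum_add_distrib, hup, hdown, Complex.add_conj, Complex.ofReal_im]

lemma im_sum_range_jacobiOp_mul_conj (hd : d 0 = 0) {C : ℕ → ℂ} {N : ℕ} (hN : C N = 0) :
    (∑ n ∈ range (N + 1), jacobiOp d b C n * conj (C n)).im
      = ∑ n ∈ range (N + 1), (b n).im * ‖C n‖ ^ 2 := by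
  have hsplit : ∀ n, jacobiOp d b C n * conj (C n)
      = ((d (n + 1) : ℂ) * C (n + 1) + (d n : ℂ) * C (n - 1)) * conj (C n)
        + b n * ((‖C n‖ ^ 2 : ℝ) : ℂ) := fun n => by
    rw [jacobiOp, Complex.ofReal_pow, ← Complex.mul_conj']; ring
  simp only [hsplit, sum_add_distrib, Complex.add_im, im_sum_range_offDiag_mul_conj hd hN,
    Complex.im_sum, Complex.im_mul_ofReal, zero_add]

lemma im_tsum_jacobiOp_mul_conj_le (hd : d 0 = 0) {δ : ℝ} (hb : ∀ n, (b n).im ≤ -δ)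
    {C : ℕ → ℂ} (hC : (Function.support C).Finite) :
    (∑' n, jacobiOp d b C n * conj (C n)).im ≤ -δ * ∑' n, ‖C n‖ ^ 2 := by
  obtain ⟨N, hN⟩ := hC.bddAbove
  have hvanish : ∀ n, N < n → C n = 0 := fun n hn =>
    Function.notMem_support.mp fun h => hn.not_ge (hN h)
  have hvanish' : ∀ n ∉ range (N + 1 + 1), C n = 0 := fun n hn =>
    hvanish n (by simp only [mem_range, not_lt] at hn; omega)
  rw [tsum_eq_sum (fun n hn => by simp [hvanish' n hn]),
    tsum_eq_sum (fun n hn => by simp [hvanish' n hn]),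
    im_sum_range_jacobiOp_mul_conj b hd (hvanish (N + 1) N.lt_succ_self), mul_sum]
  exact sum_le_sum fun n _ => mul_le_mul_of_nonneg_right (hb n) (by positivity)

lemma eq_zero_of_jacobiOp_eq_zero (hd : d 0 = 0) {δ : ℝ} (hδ : 0 < δ)
    (hb : ∀ n, (b n).im ≤ -δ) {C : ℕ → ℂ} (hC : (Function.support C).Finite)
    (hJ : ∀ n, jacobiOp d b C n = 0) : C = 0 := by
  have h := im_tsum_jacobiOp_mul_conj_le b hd hb hC
  simp only [hJ, zero_mul, tsum_zero, Complex.zero_im] at h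
  by_contra hC0
  obtain ⟨i, hi⟩ := Function.ne_iff.mp hC0
  have hsum : Summable fun n => ‖C n‖ ^ 2 :=
    summable_of_hasFiniteSupport (hC.subset fun n hn h0 => hn (by simp [h0]))
  have hpos := hsum.tsum_pos (fun n => by positivity) i (pow_pos (norm_pos_iff.mpr hi) 2)
  nlinarith

end Jacobi

/-- For `Im Λ > 0` the operator `J(Λ;μ)` is strictly dissipative on finitely
supported sequences: `Im⟨J(Λ;μ)C, C⟩ ≤ −δ‖C‖²` for some `δ = δ(Λ,μ) > 0`;
in particular it has trivial kernel there. -/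
theorem JLam_dissipative (μ : ℝ) (hμ : 0 < μ) (Λ : ℂ) (hΛ : 0 < Λ.im) :
    (∃ δ : ℝ, 0 < δ ∧ ∀ C : ℕ → ℂ, (Function.support C).Finite →
      (∑' n, JLam Λ μ C n * (starRingEnd ℂ) (C n)).im ≤ -δ * ∑' n, ‖C n‖ ^ 2) ∧
    (∀ C : ℕ → ℂ, (Function.support C).Finite → (∀ n, JLam Λ μ C n = 0) → C = 0) := by
  have hJ : JLam Λ μ = jacobiOp dEnt (fun n => 2 * μ * yEnt n Λ) := rfl
  have hd : dEnt 0 = 0 := by simp [dEnt]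
  set δ := 2 * μ * (Λ.im / (2 * √(1 + 2 * ‖Λ‖)))
  have hδ : 0 < δ := by positivity
  have hb : ∀ n, (2 * μ * yEnt n Λ).im ≤ -δ := fun n => by
    have h := yEnt_im_le n hΛ
    have hreal : 2 * (μ : ℂ) * yEnt n Λ = ((2 * μ : ℝ) : ℂ) * yEnt n Λ := by push_cast; ring
    rw [hreal, Complex.im_ofReal_mul]
    linarith [mul_le_mul_of_nonneg_left h (by positivity : (0 : ℝ) ≤ 2 * μ)]
  rw [hJ]
  exact ⟨⟨δ, hδ, fun C hC => im_tsum_jacobiOp_mul_conj_le _ hd hb hC⟩,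
    fun C hC => eq_zero_of_jacobiOp_eq_zero _ hd hδ hb hC⟩
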